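/- arXiv:2310.20538 — 3 statements merged into one kernel-verified Lean document; each statement's English description precedes it below -/
import Mathlib

section
/- Let C > 0 and suppose that H''₂₃(x₂,C,x₄) = 0 and H''₃₄(x₂,C,x₄) = 0 for all x₂,x₄ ∈ ℝ. Then the hyperplane immersion F(u₁,u₂,u₃) = (u₁,u₃,C,u₂), defined on V = ℝ³ with unit normal ξ = (0,0,C/β,0), is a parallel hypersurface of the Siklos metric (∇h ≡ 0), it is not totally geodesic (h ≢ 0), and it has constant mean curvature: (1/3)Σᵢⱼ ĝⁱʲhᵢⱼ = 1/β at every point of V. -/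
open scoped BigOperators

/-- Partial derivative of `f : ℝⁿ → ℝ` in the `i`-th coordinate direction. -/
noncomputable def pd {n : ℕ} (i : Fin n) (f : (Fin n → ℝ) → ℝ) (x : Fin n → ℝ) : ℝ :=
  deriv (fun t => f (Function.update x i t)) (x i)

/-- Christoffel symbols `Γᵏᵢⱼ` of a metric field `g`. -/
noncomputable def christoffel {n : ℕ} (g : (Fin n → ℝ) → Matrix (Fin n) (Fin n) ℝ)
    (x : Fin n → ℝ) (k i j : Fin n) : ℝ :=
  (1 / 2) * ∑ l, (g x)⁻¹ k l *
    (pd i (fun y => g y l j) x + pd j (fun y => g y l i) x - pd l (fun y => g y i j) x)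

/-- `curv g x i j k l` is the `l`-th component of `R(∂ᵢ,∂ⱼ)∂ₖ` at `x`
(convention `R(X,Y) = [∇_X,∇_Y] − ∇_{[X,Y]}`). -/
noncomputable def curv {n : ℕ} (g : (Fin n → ℝ) → Matrix (Fin n) (Fin n) ℝ)
    (x : Fin n → ℝ) (i j k l : Fin n) : ℝ :=
  pd i (fun y => christoffel g y l j k) x - pd j (fun y => christoffel g y l i k) x
    + ∑ m, (christoffel g x l i m * christoffel g x m j k
        - christoffel g x l j m * christoffel g x m i k)

/-- The Siklos metric with parameter `β` and defining function `H = H(x₂,x₃,x₄)`;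
indices `0,1,2,3` correspond to the coordinates `x₁,x₂,x₃,x₄`. -/
noncomputable def siklos (β : ℝ) (H : ℝ → ℝ → ℝ → ℝ) (x : Fin 4 → ℝ) :
    Matrix (Fin 4) (Fin 4) ℝ :=
  Matrix.of fun i j =>
    if (i = 0 ∧ j = 1) ∨ (i = 1 ∧ j = 0) ∨ (i = 2 ∧ j = 2) ∨ (i = 3 ∧ j = 3) then
      β ^ 2 / x 2 ^ 2
    else if i = 1 ∧ j = 1 then β ^ 2 / x 2 ^ 2 * H (x 1) (x 2) (x 3)
    else 0

/-- `H'₂`. -/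
noncomputable def H2 (H : ℝ → ℝ → ℝ → ℝ) (a b c : ℝ) : ℝ := deriv (fun t => H t b c) a
/-- `H'₃`. -/
noncomputable def H3 (H : ℝ → ℝ → ℝ → ℝ) (a b c : ℝ) : ℝ := deriv (fun t => H a t c) b
/-- `H'₄`. -/
noncomputable def H4 (H : ℝ → ℝ → ℝ → ℝ) (a b c : ℝ) : ℝ := deriv (fun t => H a b t) c
/-- `H''₂₃`. -/
noncomputable def H23 (H : ℝ → ℝ → ℝ → ℝ) (a b c : ℝ) : ℝ := deriv (fun t => H3 H t b c) a
/-- `H''₃₃`. -/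
noncomputable def H33 (H : ℝ → ℝ → ℝ → ℝ) (a b c : ℝ) : ℝ := deriv (fun t => H3 H a t c) b
/-- `H''₃₄`. -/
noncomputable def H34 (H : ℝ → ℝ → ℝ → ℝ) (a b c : ℝ) : ℝ := deriv (fun t => H4 H a t c) b
/-- `H''₄₄`. -/
noncomputable def H44 (H : ℝ → ℝ → ℝ → ℝ) (a b c : ℝ) : ℝ := deriv (fun t => H4 H a b t) c

/-- Ricci tensor `Ricⱼₖ = Σᵢ (R(∂ᵢ,∂ⱼ)∂ₖ)ⁱ` of the Siklos metric. -/
noncomputable def ricci (β : ℝ) (H : ℝ → ℝ → ℝ → ℝ) (x : Fin 4 → ℝ) (j k : Fin 4) : ℝ :=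
  ∑ i, curv (siklos β H) x i j k i

/-- Scalar curvature of the Siklos metric. -/
noncomputable def scal (β : ℝ) (H : ℝ → ℝ → ℝ → ℝ) (x : Fin 4 → ℝ) : ℝ :=
  ∑ j, ∑ k, (siklos β H x)⁻¹ j k * ricci β H x j k

/-- `g(X,Y) = Σᵢⱼ gᵢⱼ Xⁱ Yʲ`. -/
noncomputable def gApply (M : Matrix (Fin 4) (Fin 4) ℝ) (X Y : Fin 4 → ℝ) : ℝ :=
  ∑ i, ∑ j, M i j * X i * Y j

/-- Curvature applied to arbitrary vectors: `R(X,Y)Z = Σᵢⱼₖ XⁱYʲZᵏ R(∂ᵢ,∂ⱼ)∂ₖ`. -/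
noncomputable def Rmulti (β : ℝ) (H : ℝ → ℝ → ℝ → ℝ) (x : Fin 4 → ℝ)
    (X Y Z : Fin 4 → ℝ) (l : Fin 4) : ℝ :=
  ∑ i, ∑ j, ∑ k, X i * Y j * Z k * curv (siklos β H) x i j k l

/-- `Rₐᵦ𝒸𝒹 = g(R(∂ₐ,∂ᵦ)∂𝒹, ∂𝒸)`. -/
noncomputable def Rlow (β : ℝ) (H : ℝ → ℝ → ℝ → ℝ) (x : Fin 4 → ℝ) (a b c d : Fin 4) : ℝ :=
  ∑ l, siklos β H x l c * curv (siklos β H) x a b d l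

/-- The Weyl tensor (in dimension 4) of the Siklos metric. -/
noncomputable def weyl (β : ℝ) (H : ℝ → ℝ → ℝ → ℝ) (x : Fin 4 → ℝ) (a b c d : Fin 4) : ℝ :=
  Rlow β H x a b c d
    - (1 / 2) * (siklos β H x a c * ricci β H x b d - siklos β H x a d * ricci β H x b c
        + siklos β H x b d * ricci β H x a c - siklos β H x b c * ricci β H x a d)
    + scal β H x / 6 *
        (siklos β H x a c * siklos β H x b d - siklos β H x a d * siklos β H x b c)

/-- Coordinate tangent vector `F_{uᵢ}` of an immersion `F : ℝ³ → ℝ⁴`. -/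
noncomputable def Fu (F : (Fin 3 → ℝ) → Fin 4 → ℝ) (i : Fin 3) (u : Fin 3 → ℝ) :
    Fin 4 → ℝ := fun k => pd i (fun v => F v k) u

/-- Ambient covariant derivative `DᵢF_{uⱼ}` along `F`, for the Siklos metric. -/
noncomputable def ambD (β : ℝ) (H : ℝ → ℝ → ℝ → ℝ) (F : (Fin 3 → ℝ) → Fin 4 → ℝ)
    (i j : Fin 3) (u : Fin 3 → ℝ) : Fin 4 → ℝ :=
  fun k => pd i (fun v => Fu F j v k) u
    + ∑ l, ∑ m, christoffel (siklos β H) (F u) k l m * Fu F i u l * Fu F j u m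

/-- Second fundamental form `hᵢⱼ = g(DᵢF_{uⱼ}, ξ)` of `F` with unit normal `ξ`. -/
noncomputable def sff (β : ℝ) (H : ℝ → ℝ → ℝ → ℝ) (F ξ : (Fin 3 → ℝ) → Fin 4 → ℝ)
    (i j : Fin 3) (u : Fin 3 → ℝ) : ℝ :=
  gApply (siklos β H (F u)) (ambD β H F i j u) (ξ u)

/-- Induced metric `ĝᵢⱼ = g(F_{uᵢ}, F_{uⱼ})` of the hypersurface. -/
noncomputable def inducedMetric (β : ℝ) (H : ℝ → ℝ → ℝ → ℝ) (F : (Fin 3 → ℝ) → Fin 4 → ℝ)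
    (u : Fin 3 → ℝ) : Matrix (Fin 3) (Fin 3) ℝ :=
  Matrix.of fun i j => gApply (siklos β H (F u)) (Fu F i u) (Fu F j u)

/-- Covariant derivative of the second fundamental form,
`(∇h)ₖᵢⱼ = ∂ₖhᵢⱼ − Σₗ Γ̂ˡₖᵢ hₗⱼ − Σₗ Γ̂ˡₖⱼ hᵢₗ`. -/
noncomputable def nablah (β : ℝ) (H : ℝ → ℝ → ℝ → ℝ) (F ξ : (Fin 3 → ℝ) → Fin 4 → ℝ)
    (k i j : Fin 3) (u : Fin 3 → ℝ) : ℝ :=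
  pd k (fun v => sff β H F ξ i j v) u
    - ∑ l, christoffel (inducedMetric β H F) u l k i * sff β H F ξ l j u
    - ∑ l, christoffel (inducedMetric β H F) u l k j * sff β H F ξ i l u

/-- Mean curvature `(1/3) Σᵢⱼ ĝⁱʲ hᵢⱼ` of the hypersurface. -/
noncomputable def meanCurv (β : ℝ) (H : ℝ → ℝ → ℝ → ℝ) (F ξ : (Fin 3 → ℝ) → Fin 4 → ℝ)
    (u : Fin 3 → ℝ) : ℝ :=
  (1 / 3) * ∑ i, ∑ j, (inducedMetric β H F u)⁻¹ i j * sff β H F ξ i j u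

section calc1
variable {H : ℝ → ℝ → ℝ → ℝ}
  (hH : ContDiff ℝ (⊤ : ℕ∞) fun p : ℝ × ℝ × ℝ => H p.1 p.2.1 p.2.2)

private lemma curve1 (b c a : ℝ) : HasDerivAt (fun t : ℝ => ((t, b, c) : ℝ × ℝ × ℝ))
    (1, 0, 0) a := (HasDerivAt.prodMk (hasDerivAt_id a) (HasDerivAt.prodMk (hasDerivAt_const a b) (hasDerivAt_const a c)))

private lemma curve2 (a c b : ℝ) : HasDerivAt (fun t : ℝ => ((a, t, c) : ℝ × ℝ × ℝ))
    (0, 1, 0) b := (HasDerivAt.prodMk (hasDerivAt_const b a) (HasDerivAt.prodMk (hasDerivAt_id b) (hasDerivAt_const b c)))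

private lemma curve3 (a b c : ℝ) : HasDerivAt (fun t : ℝ => ((a, b, t) : ℝ × ℝ × ℝ))
    (0, 0, 1) c := (HasDerivAt.prodMk (hasDerivAt_const c a) (HasDerivAt.prodMk (hasDerivAt_const c b) (hasDerivAt_id c)))

include hH in
lemma hdH2 (a b c : ℝ) : HasDerivAt (fun t => H t b c) (H2 H a b c) a := by
  have h : HasDerivAt (fun t => H t b c)
      (fderiv ℝ (fun p : ℝ × ℝ × ℝ => H p.1 p.2.1 p.2.2) (a, b, c) (1, 0, 0)) a :=
    by have := ((hH.differentiable (by simp) (a, b, c)).hasFDerivAt).comp_hasDerivAt a (curve1 b c a); exact this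
  unfold H2
  rw [h.deriv]; exact h

include hH in
lemma hdH3 (a b c : ℝ) : HasDerivAt (fun t => H a t c) (H3 H a b c) b := by
  have h : HasDerivAt (fun t => H a t c)
      (fderiv ℝ (fun p : ℝ × ℝ × ℝ => H p.1 p.2.1 p.2.2) (a, b, c) (0, 1, 0)) b :=
    by have := ((hH.differentiable (by simp) (a, b, c)).hasFDerivAt).comp_hasDerivAt b (curve2 a c b); exact this
  unfold H3
  rw [h.deriv]; exact h

include hH in
lemma hdH4 (a b c : ℝ) : HasDerivAt (fun t => H a b t) (H4 H a b c) c := by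
  have h : HasDerivAt (fun t => H a b t)
      (fderiv ℝ (fun p : ℝ × ℝ × ℝ => H p.1 p.2.1 p.2.2) (a, b, c) (0, 0, 1)) c :=
    by have := ((hH.differentiable (by simp) (a, b, c)).hasFDerivAt).comp_hasDerivAt c (curve3 a b c); exact this
  unfold H4
  rw [h.deriv]; exact h

end calc1

section calc2
variable {H : ℝ → ℝ → ℝ → ℝ}
  (hH : ContDiff ℝ (⊤ : ℕ∞) fun p : ℝ × ℝ × ℝ => H p.1 p.2.1 p.2.2)

include hH in
private lemma gdiff : Differentiable ℝ (fderiv ℝ fun p : ℝ × ℝ × ℝ => H p.1 p.2.1 p.2.2) :=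
  (hH.fderiv_right (m := 1) (WithTop.coe_le_coe.mpr le_top)).differentiable (by simp)

include hH in
private lemma H3_eq (a b c : ℝ) :
    H3 H a b c = fderiv ℝ (fun p : ℝ × ℝ × ℝ => H p.1 p.2.1 p.2.2) (a, b, c) (0, 1, 0) := by
  have h : HasDerivAt (fun t => H a t c)
      (fderiv ℝ (fun p : ℝ × ℝ × ℝ => H p.1 p.2.1 p.2.2) (a, b, c) (0, 1, 0)) b :=
    by have := ((hH.differentiable (by simp) (a, b, c)).hasFDerivAt).comp_hasDerivAt b (curve2 a c b); exact this
  exact h.deriv.symm ▸ rfl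

include hH in
private lemma H4_eq (a b c : ℝ) :
    H4 H a b c = fderiv ℝ (fun p : ℝ × ℝ × ℝ => H p.1 p.2.1 p.2.2) (a, b, c) (0, 0, 1) := by
  have h : HasDerivAt (fun t => H a b t)
      (fderiv ℝ (fun p : ℝ × ℝ × ℝ => H p.1 p.2.1 p.2.2) (a, b, c) (0, 0, 1)) c :=
    by have := ((hH.differentiable (by simp) (a, b, c)).hasFDerivAt).comp_hasDerivAt c (curve3 a b c); exact this
  exact h.deriv.symm ▸ rfl

include hH in
private lemma hd_fd (v w : ℝ × ℝ × ℝ) (γ : ℝ → ℝ × ℝ × ℝ) (t₀ : ℝ) (hγ : HasDerivAt γ w t₀) :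
    HasDerivAt (fun t => fderiv ℝ (fun p : ℝ × ℝ × ℝ => H p.1 p.2.1 p.2.2) (γ t) v)
      (fderiv ℝ (fderiv ℝ fun p : ℝ × ℝ × ℝ => H p.1 p.2.1 p.2.2) (γ t₀) w v) t₀ := by
  have h1 : HasDerivAt (fun t => fderiv ℝ (fun p : ℝ × ℝ × ℝ => H p.1 p.2.1 p.2.2) (γ t))
      (fderiv ℝ (fderiv ℝ fun p : ℝ × ℝ × ℝ => H p.1 p.2.1 p.2.2) (γ t₀) w) t₀ :=
    ((gdiff hH (γ t₀)).hasFDerivAt).comp_hasDerivAt t₀ hγ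
  simpa using h1.clm_apply (hasDerivAt_const t₀ v)

include hH in
lemma hdH23 (a b c : ℝ) : HasDerivAt (fun t => H3 H t b c) (H23 H a b c) a := by
  have h : HasDerivAt (fun t => H3 H t b c)
      (fderiv ℝ (fderiv ℝ fun p : ℝ × ℝ × ℝ => H p.1 p.2.1 p.2.2) (a, b, c) (1, 0, 0) (0, 1, 0))
      a := by
    have := hd_fd hH (0, 1, 0) (1, 0, 0) (fun t => (t, b, c)) a (curve1 b c a)
    simp only [← H3_eq hH] at this
    exact this
  unfold H23
  rw [h.deriv]; exact h

include hH in
lemma hdH34 (a b c : ℝ) : HasDerivAt (fun t => H3 H a b t) (H34 H a b c) c := by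
  have h : HasDerivAt (fun t => H3 H a b t)
      (fderiv ℝ (fderiv ℝ fun p : ℝ × ℝ × ℝ => H p.1 p.2.1 p.2.2) (a, b, c) (0, 0, 1) (0, 1, 0))
      c := by
    have := hd_fd hH (0, 1, 0) (0, 0, 1) (fun t => (a, b, t)) c (curve3 a b c)
    simp only [← H3_eq hH] at this
    exact this
  have h2 : HasDerivAt (fun t => H4 H a t c)
      (fderiv ℝ (fderiv ℝ fun p : ℝ × ℝ × ℝ => H p.1 p.2.1 p.2.2) (a, b, c) (0, 1, 0) (0, 0, 1))
      b := by
    have := hd_fd hH (0, 0, 1) (0, 1, 0) (fun t => (a, t, c)) b (curve2 a c b)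
    simp only [← H4_eq hH] at this
    exact this
  have hsymm := second_derivative_symmetric
      (f := fun p : ℝ × ℝ × ℝ => H p.1 p.2.1 p.2.2)
      (f' := fderiv ℝ fun p : ℝ × ℝ × ℝ => H p.1 p.2.1 p.2.2)
      (fun y => (hH.differentiable (by simp) y).hasFDerivAt)
      ((gdiff hH (a, b, c)).hasFDerivAt) ((0 : ℝ), (0 : ℝ), (1 : ℝ)) ((0 : ℝ), (1 : ℝ), (0 : ℝ))
  unfold H34
  rw [h2.deriv, ← hsymm]; exact h

end calc2


section alg1
variable {β : ℝ} {H : ℝ → ℝ → ℝ → ℝ} {x : Fin 4 → ℝ}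

lemma pd_const' {n : ℕ} (i : Fin n) (x : Fin n → ℝ) (c : ℝ) :
    pd i (fun _ : Fin n → ℝ => c) x = 0 := by simp [pd]

lemma siklos_eq : siklos β H x =
    !![0, β^2/x 2^2, 0, 0; β^2/x 2^2, β^2/x 2^2 * H (x 1) (x 2) (x 3), 0, 0;
      0, 0, β^2/x 2^2, 0; 0, 0, 0, β^2/x 2^2] := by
  ext i j
  fin_cases i <;> fin_cases j <;> simp [siklos, Matrix.vecHead, Matrix.vecTail]

lemma siklos_inv (hβ : β ≠ 0) (hx : x 2 ≠ 0) : (siklos β H x)⁻¹ =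
    !![-(x 2^2/β^2) * H (x 1) (x 2) (x 3), x 2^2/β^2, 0, 0; x 2^2/β^2, 0, 0, 0;
      0, 0, x 2^2/β^2, 0; 0, 0, 0, x 2^2/β^2] := by
  apply Matrix.inv_eq_right_inv
  ext i j
  fin_cases i <;> fin_cases j <;>
    (simp [siklos_eq, Matrix.mul_apply, Fin.sum_univ_four, Matrix.vecHead, Matrix.vecTail,
      Matrix.one_apply] <;> field_simp <;> ring)

lemma hasDerivAt_phi (hx : x 2 ≠ 0) :
    HasDerivAt (fun t : ℝ => β^2 / t^2) (-2*β^2/ x 2^3) (x 2) := by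
  have h := (hasDerivAt_const (x 2) (β^2)).fun_div (hasDerivAt_pow 2 (x 2)) (pow_ne_zero 2 hx)
  refine h.congr_deriv ?_
  field_simp
  ring

lemma pd_phi (hx : x 2 ≠ 0) (i : Fin 4) :
    pd i (fun y : Fin 4 → ℝ => β^2 / y 2 ^ 2) x = if i = 2 then -2*β^2/x 2^3 else 0 := by
  fin_cases i
  · simp [pd, Function.update_apply]
  · simp [pd, Function.update_apply]
  · simp only [show (⟨2, by omega⟩ : Fin 4) = (2 : Fin 4) from rfl, pd,
      Function.update_self, if_pos rfl]
    exact (hasDerivAt_phi hx).deriv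
  · simp [pd, Function.update_apply]

end alg1

section alg2
variable {β : ℝ} {H : ℝ → ℝ → ℝ → ℝ} {x : Fin 4 → ℝ}
  (hH : ContDiff ℝ (⊤ : ℕ∞) fun p : ℝ × ℝ × ℝ => H p.1 p.2.1 p.2.2)

include hH in
lemma pd_g11 (hx : x 2 ≠ 0) (i : Fin 4) :
    pd i (fun y : Fin 4 → ℝ => β^2 / y 2^2 * H (y 1) (y 2) (y 3)) x =
      if i = 1 then β^2/x 2^2 * H2 H (x 1) (x 2) (x 3)
      else if i = 2 then -2*β^2/x 2^3 * H (x 1) (x 2) (x 3) + β^2/x 2^2 * H3 H (x 1) (x 2) (x 3)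
      else if i = 3 then β^2/x 2^2 * H4 H (x 1) (x 2) (x 3)
      else 0 := by
  fin_cases i
  · simp [pd, Function.update_apply]
  · simp only [show (⟨1, by omega⟩ : Fin 4) = (1 : Fin 4) from rfl, pd, Function.update_apply,
      if_pos rfl]
    simp
    exact Or.inl rfl
  · simp only [show (⟨2, by omega⟩ : Fin 4) = (2 : Fin 4) from rfl, pd, Function.update_apply,
      if_pos rfl]
    simp
    rw [((hasDerivAt_phi (β:=β) hx).fun_mul (hdH3 hH (x 1) (x 2) (x 3))).deriv]
    ring
  · simp only [show (⟨3, by omega⟩ : Fin 4) = (3 : Fin 4) from rfl, pd, Function.update_apply,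
      if_pos rfl]
    simp
    exact Or.inl rfl

/-- Table of partial derivatives of the Siklos metric entries. -/
noncomputable def dS (β : ℝ) (H : ℝ → ℝ → ℝ → ℝ) (x : Fin 4 → ℝ) (i l j : Fin 4) : ℝ :=
  if (l = 0 ∧ j = 1) ∨ (l = 1 ∧ j = 0) ∨ (l = 2 ∧ j = 2) ∨ (l = 3 ∧ j = 3) then
    (if i = 2 then -2*β^2/x 2^3 else 0)
  else if l = 1 ∧ j = 1 then
    (if i = 1 then β^2/x 2^2 * H2 H (x 1) (x 2) (x 3)
      else if i = 2 then -2*β^2/x 2^3 * H (x 1) (x 2) (x 3) + β^2/x 2^2 * H3 H (x 1) (x 2) (x 3)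
      else if i = 3 then β^2/x 2^2 * H4 H (x 1) (x 2) (x 3)
      else 0)
  else 0

include hH in
lemma pd_sik (hx : x 2 ≠ 0) (i l j : Fin 4) :
    pd i (fun y => siklos β H y l j) x = dS β H x i l j := by
  by_cases h1 : (l = 0 ∧ j = 1) ∨ (l = 1 ∧ j = 0) ∨ (l = 2 ∧ j = 2) ∨ (l = 3 ∧ j = 3)
  · have hf : (fun y => siklos β H y l j) = fun y : Fin 4 → ℝ => β^2 / y 2 ^ 2 :=
      funext fun y => by simp [siklos, h1]
    rw [hf, dS, if_pos h1]
    exact pd_phi hx i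
  · by_cases h2 : l = 1 ∧ j = 1
    · obtain ⟨rfl, rfl⟩ := h2
      have hf : (fun y => siklos β H y 1 1) =
          fun y : Fin 4 → ℝ => β^2 / y 2^2 * H (y 1) (y 2) (y 3) :=
        funext fun y => by simp [siklos]
      rw [hf, dS, if_neg h1, if_pos ⟨rfl, rfl⟩]
      exact pd_g11 hH hx i
    · have hf : (fun y => siklos β H y l j) = fun _ : Fin 4 → ℝ => (0:ℝ) :=
        funext fun y => by simp [siklos, h1, h2]
      rw [hf, dS, if_neg h1, if_neg h2]
      exact pd_const' i x 0

include hH in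
lemma chr2 (hβ : β ≠ 0) (hx : x 2 ≠ 0) (i j : Fin 4) :
    christoffel (siklos β H) x 2 i j =
      ![![0, 1/x 2, 0, 0],
        ![1/x 2, H (x 1) (x 2) (x 3)/x 2 - H3 H (x 1) (x 2) (x 3)/2, 0, 0],
        ![0, 0, -(1/x 2), 0],
        ![0, 0, 0, 1/x 2]] i j := by
  fin_cases i <;> fin_cases j <;>
    · simp only [christoffel, Fin.sum_univ_four, siklos_inv hβ hx, pd_sik hH hx]
      simp [dS, Matrix.vecHead, Matrix.vecTail]
      try field_simp
      try ring

end alg2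

section alg3
variable {β : ℝ} {H : ℝ → ℝ → ℝ → ℝ} {C : ℝ}

lemma pd_coord {n : ℕ} (i m : Fin n) (x : Fin n → ℝ) :
    pd i (fun v => v m) x = if m = i then 1 else 0 := by
  by_cases h : m = i
  · subst h
    simp [pd]
  · simp [pd, Function.update_apply, h]

/-- Tangent basis table. -/
def TB : Fin 3 → Fin 4 → ℝ := ![![1, 0, 0, 0], ![0, 0, 0, 1], ![0, 1, 0, 0]]

lemma Fu_eq (i : Fin 3) (u : Fin 3 → ℝ) :
    Fu (fun u => ![u 0, u 2, C, u 1]) i u = TB i := by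
  funext k
  fin_cases i <;> fin_cases k <;>
    simp [Fu, TB, pd_coord, pd_const', Matrix.vecHead, Matrix.vecTail]

lemma ind_eq (u : Fin 3 → ℝ) :
    inducedMetric β H (fun u => ![u 0, u 2, C, u 1]) u =
      !![0, 0, β^2/C^2; 0, β^2/C^2, 0; β^2/C^2, 0, β^2/C^2 * H (u 2) C (u 1)] := by
  ext i j
  fin_cases i <;> fin_cases j <;>
    simp [inducedMetric, gApply, Fin.sum_univ_four, Fu_eq, TB, siklos_eq,
      Matrix.vecHead, Matrix.vecTail]

lemma ind_inv (hβ : β ≠ 0) (hC : C ≠ 0) (u : Fin 3 → ℝ) :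
    (inducedMetric β H (fun u => ![u 0, u 2, C, u 1]) u)⁻¹ =
      !![-(C^2/β^2) * H (u 2) C (u 1), 0, C^2/β^2; 0, C^2/β^2, 0; C^2/β^2, 0, 0] := by
  apply Matrix.inv_eq_right_inv
  ext i j
  fin_cases i <;> fin_cases j <;>
    · simp [ind_eq, Matrix.mul_apply, Fin.sum_univ_three, Matrix.vecHead, Matrix.vecTail,
        Matrix.one_apply]
      try field_simp
      try ring

end alg3

section alg4
variable {β : ℝ} {H : ℝ → ℝ → ℝ → ℝ} {C : ℝ} {u : Fin 3 → ℝ}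
  (hH : ContDiff ℝ (⊤ : ℕ∞) fun p : ℝ × ℝ × ℝ => H p.1 p.2.1 p.2.2)

omit hH in
lemma pd_hfun (i : Fin 3) :
    pd i (fun v : Fin 3 → ℝ => β^2/C^2 * H (v 2) C (v 1)) u =
      if i = 1 then β^2/C^2 * H4 H (u 2) C (u 1)
      else if i = 2 then β^2/C^2 * H2 H (u 2) C (u 1)
      else 0 := by
  fin_cases i
  · simp [pd, Function.update_apply]
  · simp only [show (⟨1, by omega⟩ : Fin 3) = (1 : Fin 3) from rfl, pd, Function.update_apply,
      if_pos rfl]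
    simp
    exact Or.inl rfl
  · simp only [show (⟨2, by omega⟩ : Fin 3) = (2 : Fin 3) from rfl, pd, Function.update_apply,
      if_pos rfl]
    simp
    exact Or.inl rfl

lemma indf (l j : Fin 3) :
    (fun v : Fin 3 → ℝ => inducedMetric β H (fun u => ![u 0, u 2, C, u 1]) v l j) =
      (fun v : Fin 3 → ℝ =>
        (!![0, 0, β^2/C^2; 0, β^2/C^2, 0; β^2/C^2, 0, β^2/C^2 * H (v 2) C (v 1)] :
          Matrix (Fin 3) (Fin 3) ℝ) l j) :=
  funext fun v => by rw [ind_eq]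

/-- Christoffel table of the induced metric. -/
noncomputable def GH (H : ℝ → ℝ → ℝ → ℝ) (C : ℝ) (u : Fin 3 → ℝ) (l k i : Fin 3) : ℝ :=
  if l = 0 ∧ ((k = 1 ∧ i = 2) ∨ (k = 2 ∧ i = 1)) then H4 H (u 2) C (u 1) / 2
  else if l = 0 ∧ k = 2 ∧ i = 2 then H2 H (u 2) C (u 1) / 2
  else if l = 1 ∧ k = 2 ∧ i = 2 then -(H4 H (u 2) C (u 1) / 2)
  else 0

omit hH in
set_option maxHeartbeats 2000000 in
lemma chrHat (hβ : β ≠ 0) (hC : C ≠ 0) (l k i : Fin 3) :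
    christoffel (inducedMetric β H (fun u => ![u 0, u 2, C, u 1])) u l k i =
      GH H C u l k i := by
  fin_cases l <;> fin_cases k <;> fin_cases i <;>
    · simp only [christoffel, Fin.sum_univ_three, ind_inv hβ hC, indf]
      simp [pd_hfun, pd_const', GH, Matrix.vecHead, Matrix.vecTail]
      try field_simp
      try ring

end alg4

section alg5
variable {β : ℝ} {H : ℝ → ℝ → ℝ → ℝ} {C : ℝ}
  (hH : ContDiff ℝ (⊤ : ℕ∞) fun p : ℝ × ℝ × ℝ => H p.1 p.2.1 p.2.2)

/-- Second fundamental form table. -/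
noncomputable def SS (β : ℝ) (H : ℝ → ℝ → ℝ → ℝ) (C : ℝ) (i j : Fin 3) (v : Fin 3 → ℝ) : ℝ :=
  if (i = 0 ∧ j = 2) ∨ (i = 2 ∧ j = 0) ∨ (i = 1 ∧ j = 1) then β/C^2
  else if i = 2 ∧ j = 2 then β/C^2 * H (v 2) C (v 1) - β/(2*C) * H3 H (v 2) C (v 1)
  else 0

include hH in
set_option maxHeartbeats 2000000 in
lemma sff_eq (hβ : β ≠ 0) (hC : C ≠ 0) (i j : Fin 3) (v : Fin 3 → ℝ) :
    sff β H (fun u => ![u 0, u 2, C, u 1]) (fun _ => ![0, 0, C/β, 0]) i j v =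
      SS β H C i j v := by
  have hx2 : (![v 0, v 2, C, v 1] : Fin 4 → ℝ) 2 ≠ 0 := by simpa using hC
  fin_cases i <;> fin_cases j <;>
    · simp only [sff, gApply, ambD, Fin.sum_univ_four, Fu_eq]
      simp [siklos_eq, TB, chr2 hH hβ hx2, pd_const', SS, Matrix.vecHead, Matrix.vecTail]
      try field_simp
      try ring

end alg5

section alg6
variable {β : ℝ} {H : ℝ → ℝ → ℝ → ℝ} {C : ℝ}
  (hH : ContDiff ℝ (⊤ : ℕ∞) fun p : ℝ × ℝ × ℝ => H p.1 p.2.1 p.2.2)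

include hH in
lemma pd_SS (u : Fin 3 → ℝ) (h23 : ∀ a c : ℝ, H23 H a C c = 0)
    (h34 : ∀ a c : ℝ, H34 H a C c = 0) (k i j : Fin 3) :
    pd k (fun v => SS β H C i j v) u =
      if i = 2 ∧ j = 2 then
        (if k = 1 then β/C^2 * H4 H (u 2) C (u 1)
         else if k = 2 then β/C^2 * H2 H (u 2) C (u 1) else 0)
      else 0 := by
  by_cases h : i = 2 ∧ j = 2
  · obtain ⟨rfl, rfl⟩ := h
    have hf : (fun v => SS β H C 2 2 v) =
        fun v : Fin 3 → ℝ => β/C^2 * H (v 2) C (v 1) - β/(2*C) * H3 H (v 2) C (v 1) := by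
      funext v; simp [SS]
    rw [hf, if_pos ⟨rfl, rfl⟩]
    have hk : k = 0 ∨ k = 1 ∨ k = 2 := by fin_cases k <;> simp
    rcases hk with rfl | rfl | rfl
    · simp [pd, Function.update_apply]
    · simp only [pd]
      have hD : HasDerivAt (fun t => β/C^2 * H (u 2) C t - β/(2*C) * H3 H (u 2) C t)
          (β/C^2 * H4 H (u 2) C (u 1) - β/(2*C) * H34 H (u 2) C (u 1)) (u 1) :=
        ((hdH4 hH (u 2) C (u 1)).const_mul _).sub ((hdH34 hH (u 2) C (u 1)).const_mul _)
      rw [show (fun t => β/C^2 * H (Function.update u 1 t 2) C (Function.update u 1 t 1)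
            - β/(2*C) * H3 H (Function.update u 1 t 2) C (Function.update u 1 t 1)) =
          fun t => β/C^2 * H (u 2) C t - β/(2*C) * H3 H (u 2) C t from
          funext fun t => by simp [Function.update_apply]]
      rw [hD.deriv, h34 (u 2) (u 1)]
      simp
    · simp only [pd]
      have hD : HasDerivAt (fun t => β/C^2 * H t C (u 1) - β/(2*C) * H3 H t C (u 1))
          (β/C^2 * H2 H (u 2) C (u 1) - β/(2*C) * H23 H (u 2) C (u 1)) (u 2) :=
        ((hdH2 hH (u 2) C (u 1)).const_mul _).sub ((hdH23 hH (u 2) C (u 1)).const_mul _)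
      rw [show (fun t => β/C^2 * H (Function.update u 2 t 2) C (Function.update u 2 t 1)
            - β/(2*C) * H3 H (Function.update u 2 t 2) C (Function.update u 2 t 1)) =
          fun t => β/C^2 * H t C (u 1) - β/(2*C) * H3 H t C (u 1) from
          funext fun t => by simp [Function.update_apply]]
      rw [hD.deriv, h23 (u 2) (u 1)]
      simp
  · have hf : (fun v => SS β H C i j v) = fun _ : Fin 3 → ℝ =>
        (if (i = 0 ∧ j = 2) ∨ (i = 2 ∧ j = 0) ∨ (i = 1 ∧ j = 1) then β/C^2 else 0) := by
      funext v; simp only [SS, h, if_false]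
    rw [hf, if_neg h, pd_const']

include hH in
set_option maxHeartbeats 2000000 in
lemma nablah_zero (hβ : β ≠ 0) (hC : C ≠ 0) (h23 : ∀ a c : ℝ, H23 H a C c = 0)
    (h34 : ∀ a c : ℝ, H34 H a C c = 0) (u : Fin 3 → ℝ) (k i j : Fin 3) :
    nablah β H (fun u => ![u 0, u 2, C, u 1]) (fun _ => ![0, 0, C/β, 0]) k i j u = 0 := by
  have hfs : ∀ i j : Fin 3, (fun v => sff β H (fun u => ![u 0, u 2, C, u 1])
      (fun _ => ![0, 0, C/β, 0]) i j v) = fun v => SS β H C i j v :=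
    fun i j => funext fun v => sff_eq hH hβ hC i j v
  simp only [nablah, Fin.sum_univ_three, hfs, pd_SS hH u h23 h34, chrHat hβ hC,
    sff_eq hH hβ hC]
  fin_cases k <;> fin_cases i <;> fin_cases j <;>
    · simp [GH, SS]
      try field_simp
      try ring

end alg6

section alg7
variable {β : ℝ} {H : ℝ → ℝ → ℝ → ℝ} {C : ℝ}
  (hH : ContDiff ℝ (⊤ : ℕ∞) fun p : ℝ × ℝ × ℝ => H p.1 p.2.1 p.2.2)

include hH in
lemma mean_eq (hβ : β ≠ 0) (hC : C ≠ 0) (u : Fin 3 → ℝ) :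
    meanCurv β H (fun u => ![u 0, u 2, C, u 1]) (fun _ => ![0, 0, C/β, 0]) u = 1/β := by
  simp only [meanCurv, Fin.sum_univ_three, ind_inv hβ hC, sff_eq hH hβ hC]
  simp [SS, Matrix.vecHead, Matrix.vecTail]
  field_simp
  ring

end alg7

/-- under `H''₂₃ = H''₃₄ = 0` on `{x₃ = C}`, the hyperplane `x₃ = C`
is a parallel, non-totally-geodesic hypersurface with constant mean curvature `1/β`. -/
theorem stmt_13 (β : ℝ) (hβ : 0 < β) (H : ℝ → ℝ → ℝ → ℝ)
    (hH : ContDiff ℝ (⊤ : ℕ∞) fun p : ℝ × ℝ × ℝ => H p.1 p.2.1 p.2.2)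
    (C : ℝ) (hC : 0 < C)
    (h23 : ∀ a c : ℝ, H23 H a C c = 0) (h34 : ∀ a c : ℝ, H34 H a C c = 0)
    (F ξ : (Fin 3 → ℝ) → Fin 4 → ℝ)
    (hF : F = fun u => ![u 0, u 2, C, u 1])
    (hξ : ξ = fun _ => ![0, 0, C / β, 0]) :
    (∀ u : Fin 3 → ℝ,
      gApply (siklos β H (F u)) (ξ u) (ξ u) = 1 ∧
      ∀ i : Fin 3, gApply (siklos β H (F u)) (ξ u) (Fu F i u) = 0) ∧
    (∀ u : Fin 3 → ℝ, ∀ k i j : Fin 3, nablah β H F ξ k i j u = 0) ∧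
    ¬(∀ u : Fin 3 → ℝ, ∀ i j : Fin 3, sff β H F ξ i j u = 0) ∧
    (∀ u : Fin 3 → ℝ, meanCurv β H F ξ u = 1 / β) := by
  subst hF hξ
  have hb : β ≠ 0 := ne_of_gt hβ
  have hc : C ≠ 0 := ne_of_gt hC
  refine ⟨?_, ?_, ?_, ?_⟩
  · intro u
    constructor
    · simp [gApply, Fin.sum_univ_four, siklos_eq, Matrix.vecHead, Matrix.vecTail]
      field_simp
    · intro i
      fin_cases i <;>
        simp [gApply, Fin.sum_univ_four, siklos_eq, Fu_eq, TB, Matrix.vecHead, Matrix.vecTail]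
  · exact fun u k i j => nablah_zero hH hb hc h23 h34 u k i j
  · intro hall
    have h1 := hall (fun _ => 0) 1 1
    rw [sff_eq hH hb hc] at h1
    simp [SS] at h1
    rcases h1 with h1 | h1
    · exact hb h1
    · exact hc h1
  · exact fun u => mean_eq hH hb hc u
end

section
/- Take the defining function H(x₂,x₃,x₄) = x₃² (the homogeneous Siklos metric with ε = 1, k = 1). For every ρ > 0, the immersion F(u₁,u₂,u₃) = (u₁, u₃, ρe^{−u₃}, −u₂e^{−u₃}), defined on V = ℝ³ with unit normal ξ(u) = (ρ²e^{−2u₃}/β, 0, ρe^{−u₃}/β, 0), is a parallel hypersurface of the Siklos metric (∇h ≡ 0) which is not totally geodesic (h ≢ 0). -/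
open scoped BigOperators

/-!
The second fundamental form of `F` is `β⁻¹` times its induced metric: `F` is totally umbilical
with constant principal curvature `1 / β`. Since the Levi-Civita connection of the induced metric
is metric, `∇h = β⁻¹ ∇ĝ = 0`, while `h ≠ 0`. What remains is the explicit computation of the
Christoffel symbols of the Siklos metric with `H = x₃²` and of `DᵢF_{uⱼ}`.
-/

theorem Real.deriv_exp_neg (x : ℝ) : deriv (fun t => Real.exp (-t)) x = -Real.exp (-x) := by
  simpa [Function.comp_def] using ((Real.hasDerivAt_exp (-x)).comp x (hasDerivAt_neg x)).deriv

theorem Real.exp_two_mul (x : ℝ) : Real.exp (2 * x) = Real.exp x ^ 2 := by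
  exact_mod_cast Real.exp_nat_mul x 2

theorem pd_const_mul {n : ℕ} (i : Fin n) (c : ℝ) (f : (Fin n → ℝ) → ℝ) (x : Fin n → ℝ) :
    pd i (fun y => c * f y) x = c * pd i f x := by
  simp only [pd, deriv_const_mul_field']

section LeviCivita

variable {n : ℕ} (g : (Fin n → ℝ) → Matrix (Fin n) (Fin n) ℝ) (x : Fin n → ℝ)

theorem sum_mul_christoffel (hg : IsUnit (g x).det) (m i j : Fin n) :
    ∑ k, g x m k * christoffel g x k i j =
      (1 / 2) * (pd i (fun y => g y m j) x + pd j (fun y => g y m i) x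
        - pd m (fun y => g y i j) x) := by
  have hinv : ∀ l, ∑ k, g x m k * (g x)⁻¹ k l = if m = l then 1 else 0 := fun l => by
    rw [← Matrix.mul_apply, Matrix.mul_nonsing_inv _ hg, Matrix.one_apply]
  simp only [christoffel, Finset.mul_sum]
  rw [Finset.sum_comm]
  simp only [← mul_assoc, mul_comm _ (1 / 2 : ℝ)]
  simp only [mul_assoc (1 / 2 : ℝ), ← Finset.mul_sum, ← Finset.sum_mul, hinv]
  simp

/-- Metric compatibility of the Levi-Civita connection: `∇g = 0`. -/
theorem pd_eq_sum_christoffel_mul (hsymm : ∀ y, (g y).IsSymm) (hg : IsUnit (g x).det)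
    (k i j : Fin n) :
    pd k (fun y => g y i j) x =
      ∑ l, christoffel g x l k i * g x l j + ∑ l, christoffel g x l k j * g x i l := by
  have hswap : ∀ a b, (fun y => g y a b) = fun y => g y b a :=
    fun a b => funext fun y => ((hsymm y).apply a b).symm
  have h₁ : ∑ l, christoffel g x l k i * g x l j = ∑ l, g x j l * christoffel g x l k i :=
    Finset.sum_congr rfl fun l _ => by rw [(hsymm x).apply j l, mul_comm]
  have h₂ : ∑ l, christoffel g x l k j * g x i l = ∑ l, g x i l * christoffel g x l k j :=
    Finset.sum_congr rfl fun l _ => mul_comm _ _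
  rw [h₁, h₂, sum_mul_christoffel g x hg, sum_mul_christoffel g x hg, hswap j i, hswap j k,
    hswap k i]
  ring

end LeviCivita

theorem siklos_isSymm (β : ℝ) (H : ℝ → ℝ → ℝ → ℝ) (x : Fin 4 → ℝ) : (siklos β H x).IsSymm :=
  Matrix.IsSymm.ext fun i j => by fin_cases i <;> fin_cases j <;> simp [siklos]

theorem gApply_comm {M : Matrix (Fin 4) (Fin 4) ℝ} (hM : M.IsSymm) (X Y : Fin 4 → ℝ) :
    gApply M X Y = gApply M Y X := by
  rw [gApply, gApply, Finset.sum_comm]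
  refine Finset.sum_congr rfl fun i _ => Finset.sum_congr rfl fun j _ => ?_
  rw [hM.apply]
  ring

theorem inducedMetric_isSymm (β : ℝ) (H : ℝ → ℝ → ℝ → ℝ) (F : (Fin 3 → ℝ) → Fin 4 → ℝ)
    (u : Fin 3 → ℝ) : (inducedMetric β H F u).IsSymm :=
  Matrix.IsSymm.ext fun _ _ => gApply_comm (siklos_isSymm β H _) _ _

theorem nablah_eq_zero_of_sff_eq_const_mul (β : ℝ) (H : ℝ → ℝ → ℝ → ℝ)
    (F ξ : (Fin 3 → ℝ) → Fin 4 → ℝ) (c : ℝ)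
    (hsff : ∀ i j v, sff β H F ξ i j v = c * inducedMetric β H F v i j)
    (u : Fin 3 → ℝ) (hdet : IsUnit (inducedMetric β H F u).det) (k i j : Fin 3) :
    nablah β H F ξ k i j u = 0 := by
  simp only [nablah, hsff, pd_const_mul,
    pd_eq_sum_christoffel_mul _ u (inducedMetric_isSymm β H F) hdet k i j]
  rw [mul_add, Finset.mul_sum, Finset.mul_sum]
  simp only [mul_left_comm c]
  ring

namespace QuadraticSiklos

def H : ℝ → ℝ → ℝ → ℝ := fun _ b _ => b ^ 2

noncomputable def F (ρ : ℝ) : (Fin 3 → ℝ) → Fin 4 → ℝ :=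
  fun u => ![u 0, u 2, ρ * Real.exp (-u 2), -u 1 * Real.exp (-u 2)]

noncomputable def ξ (β ρ : ℝ) : (Fin 3 → ℝ) → Fin 4 → ℝ :=
  fun u => ![ρ ^ 2 * Real.exp (-(2 * u 2)) / β, 0, ρ * Real.exp (-u 2) / β, 0]

section Ambient

variable {β : ℝ} (x : Fin 4 → ℝ)

noncomputable def siklosInv (β s : ℝ) : Matrix (Fin 4) (Fin 4) ℝ :=
  (s ^ 2 / β ^ 2) • !![-s ^ 2, 1, 0, 0; 1, 0, 0, 0; 0, 0, 1, 0; 0, 0, 0, 1]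

theorem siklos_inv (hβ : β ≠ 0) (hx : x 2 ≠ 0) : (siklos β H x)⁻¹ = siklosInv β (x 2) := by
  refine Matrix.inv_eq_right_inv (Matrix.ext fun i j => ?_)
  fin_cases i <;> fin_cases j <;>
    simp [Matrix.mul_apply, Fin.sum_univ_four, siklos, siklosInv, H] <;>
    field_simp
  ring

/-- Only `x₃` enters the metric coefficients, and `g₂₂ = β²` is constant. -/
theorem pd_siklos (hx : x 2 ≠ 0) (i l j : Fin 4) :
    pd i (fun y => siklos β H y l j) x =
      if i = 2 ∧ ((l = 0 ∧ j = 1) ∨ (l = 1 ∧ j = 0) ∨ (l = 2 ∧ j = 2) ∨ (l = 3 ∧ j = 3)) then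
        -2 * β ^ 2 / x 2 ^ 3
      else 0 := by
  have hconst : deriv (fun t => β ^ 2 / t ^ 2 * t ^ 2) (x 2) = 0 := by
    rw [(Filter.eventuallyEq_of_mem (isOpen_ne.mem_nhds hx) fun t (ht : t ≠ 0) => by
      field_simp : (fun t => β ^ 2 / t ^ 2 * t ^ 2) =ᶠ[nhds (x 2)] fun _ => β ^ 2).deriv_eq]
    simp
  have hcoef : deriv (fun t => β ^ 2 / t ^ 2) (x 2) = -2 * β ^ 2 / x 2 ^ 3 := by
    simp [div_eq_mul_inv, hx]
    field_simp
  fin_cases i <;> fin_cases l <;> fin_cases j <;>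
    simp [pd, siklos, H, hcoef, hconst]

/-- `christoffelTable s k i j = Γᵏᵢⱼ` at a point with `x₃ = s`. -/
noncomputable def christoffelTable (s : ℝ) : Fin 4 → Matrix (Fin 4) (Fin 4) ℝ :=
  ![!![0, 0, -1 / s, 0; 0, 0, s, 0; -1 / s, s, 0, 0; 0, 0, 0, 0],
    !![0, 0, 0, 0; 0, 0, -1 / s, 0; 0, -1 / s, 0, 0; 0, 0, 0, 0],
    !![0, 1 / s, 0, 0; 1 / s, 0, 0, 0; 0, 0, -1 / s, 0; 0, 0, 0, 1 / s],
    !![0, 0, 0, 0; 0, 0, 0, 0; 0, 0, 0, -1 / s; 0, 0, -1 / s, 0]]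

theorem christoffel_siklos (hβ : β ≠ 0) (hx : x 2 ≠ 0) (k i j : Fin 4) :
    christoffel (siklos β H) x k i j = christoffelTable (x 2) k i j := by
  rw [christoffel, siklos_inv x hβ hx]
  simp only [pd_siklos x hx]
  fin_cases k <;> fin_cases i <;> fin_cases j <;>
    simp [siklosInv, christoffelTable] <;>
    field_simp

end Ambient

section Immersion

variable {β ρ : ℝ} (u : Fin 3 → ℝ)

noncomputable def tangentFrame (ρ : ℝ) (u : Fin 3 → ℝ) : Matrix (Fin 3) (Fin 4) ℝ :=
  !![1, 0, 0, 0;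
     0, 0, 0, -Real.exp (-u 2);
     0, 1, -(ρ * Real.exp (-u 2)), u 1 * Real.exp (-u 2)]

theorem Fu_F (j : Fin 3) : Fu (F ρ) j u = tangentFrame ρ u j := by
  funext k
  fin_cases j <;> fin_cases k <;>
    simp [Fu, pd, F, tangentFrame, Real.deriv_exp_neg]

noncomputable def ambDTable (ρ : ℝ) (u : Fin 3 → ℝ) : Fin 3 → Fin 3 → Fin 4 → ℝ :=
  ![![![0, 0, 0, 0], ![0, 0, 0, 0], ![1, 0, Real.exp (u 2) / ρ, 0]],
    ![![0, 0, 0, 0], ![0, 0, Real.exp (-u 2) / ρ, 0], ![0, 0, -(u 1 * Real.exp (-u 2) / ρ), 0]],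
    ![![1, 0, Real.exp (u 2) / ρ, 0], ![0, 0, -(u 1 * Real.exp (-u 2) / ρ), 0],
      ![-(2 * ρ ^ 2 * Real.exp (-u 2) ^ 2), 2, u 1 ^ 2 * Real.exp (-u 2) / ρ,
        u 1 * Real.exp (-u 2)]]]

theorem F_two_ne_zero (hρ : ρ ≠ 0) : F ρ u 2 ≠ 0 := by
  simp [F, hρ, Real.exp_ne_zero]

theorem ambD_F (hβ : β ≠ 0) (hρ : ρ ≠ 0) (i j : Fin 3) :
    ambD β H (F ρ) i j u = ambDTable ρ u i j := by
  funext k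
  simp only [ambD, Fu_F, christoffel_siklos (F ρ u) hβ (F_two_ne_zero u hρ)]
  fin_cases i <;> fin_cases j <;> fin_cases k <;>
    simp [Fin.sum_univ_four, tangentFrame, ambDTable, christoffelTable, F, pd,
      Real.deriv_exp_neg] <;>
    simp only [Real.exp_neg] <;> field_simp <;> ring

theorem inducedMetric_F (hρ : ρ ≠ 0) :
    inducedMetric β H (F ρ) u = (β ^ 2 / ρ ^ 2) •
      !![0, 0, Real.exp (u 2) ^ 2;
         0, 1, -u 1;
         Real.exp (u 2) ^ 2, -u 1, 2 * ρ ^ 2 + u 1 ^ 2] := by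
  ext i j
  fin_cases i <;> fin_cases j <;>
    simp [inducedMetric, gApply, Fin.sum_univ_four, siklos, H, Fu_F, tangentFrame, F,
      Real.exp_neg] <;>
    field_simp
  ring

theorem isUnit_det_inducedMetric_F (hβ : β ≠ 0) (hρ : ρ ≠ 0) :
    IsUnit (inducedMetric β H (F ρ) u).det := by
  rw [inducedMetric_F u hρ, Matrix.det_smul, Matrix.det_fin_three]
  simp [hβ, hρ, Real.exp_ne_zero]

theorem sff_F (hβ : β ≠ 0) (hρ : ρ ≠ 0) (i j : Fin 3) :
    sff β H (F ρ) (ξ β ρ) i j u = β⁻¹ * inducedMetric β H (F ρ) u i j := by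
  rw [sff, ambD_F u hβ hρ, inducedMetric_F u hρ]
  fin_cases i <;> fin_cases j <;>
    simp [gApply, Fin.sum_univ_four, siklos, H, F, ξ, ambDTable, Real.exp_neg,
      Real.exp_two_mul] <;>
    field_simp

theorem gApply_ξ_ξ (hβ : β ≠ 0) (hρ : ρ ≠ 0) :
    gApply (siklos β H (F ρ u)) (ξ β ρ u) (ξ β ρ u) = 1 := by
  simp [gApply, Fin.sum_univ_four, siklos, H, F, ξ, Real.exp_neg, Real.exp_two_mul]
  field_simp

theorem gApply_ξ_Fu (i : Fin 3) :
    gApply (siklos β H (F ρ u)) (ξ β ρ u) (Fu (F ρ) i u) = 0 := by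
  rw [Fu_F]
  fin_cases i <;>
    simp [gApply, Fin.sum_univ_four, siklos, H, F, ξ, tangentFrame, Real.exp_neg,
      Real.exp_two_mul]
  ring

end Immersion

end QuadraticSiklos

/-- for `H(x₂,x₃,x₄) = x₃²` (`ε = 1`, `k = 1`), the immersion
`F(u) = (u₁, u₃, ρe^{−u₃}, −u₂e^{−u₃})` is parallel and not totally geodesic. -/
theorem stmt_17 (β : ℝ) (hβ : 0 < β)
    (H : ℝ → ℝ → ℝ → ℝ) (hH : H = fun _ b _ => b ^ 2)
    (ρ : ℝ) (hρ : 0 < ρ)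
    (F ξ : (Fin 3 → ℝ) → Fin 4 → ℝ)
    (hF : F = fun u => ![u 0, u 2, ρ * Real.exp (-u 2), -u 1 * Real.exp (-u 2)])
    (hξ : ξ = fun u => ![ρ ^ 2 * Real.exp (-(2 * u 2)) / β, 0,
      ρ * Real.exp (-u 2) / β, 0]) :
    (∀ u : Fin 3 → ℝ,
      gApply (siklos β H (F u)) (ξ u) (ξ u) = 1 ∧
      ∀ i : Fin 3, gApply (siklos β H (F u)) (ξ u) (Fu F i u) = 0) ∧
    (∀ u : Fin 3 → ℝ, ∀ k i j : Fin 3, nablah β H F ξ k i j u = 0) ∧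
    ¬(∀ u : Fin 3 → ℝ, ∀ i j : Fin 3, sff β H F ξ i j u = 0) := by
  have hH' : H = QuadraticSiklos.H := hH
  have hF' : F = QuadraticSiklos.F ρ := hF
  have hξ' : ξ = QuadraticSiklos.ξ β ρ := hξ
  subst hH' hF' hξ'
  have hβ₀ := hβ.ne'
  have hρ₀ := hρ.ne'
  have hsff := fun i j v => QuadraticSiklos.sff_F (ρ := ρ) v hβ₀ hρ₀ i j
  refine ⟨fun u => ⟨QuadraticSiklos.gApply_ξ_ξ u hβ₀ hρ₀, QuadraticSiklos.gApply_ξ_Fu u⟩,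
    fun u => nablah_eq_zero_of_sff_eq_const_mul β _ _ _ β⁻¹ hsff u
      (QuadraticSiklos.isUnit_det_inducedMetric_F u hβ₀ hρ₀), fun htg => ?_⟩
  have h₁₁ := htg 0 1 1
  rw [hsff, QuadraticSiklos.inducedMetric_F 0 hρ₀] at h₁₁
  simp [hβ₀, hρ₀] at h₁₁
end

section
/- Let ε ∈ {−1,1} and take the defining function H(x₂,x₃,x₄) = ε·x₃^{−2} (the homogeneous Siklos metric with k = −1, the Defrise spacetime). The immersion F(u₁,u₂,u₃) = (u₁, −u₃/β, u₃, −u₂u₃/β), defined on V = {u ∈ ℝ³ : u₃ > 0} with unit normal ξ(u) = (u₃, 0, u₃/β, 0), is a parallel hypersurface of the Siklos metric (∇h ≡ 0) which is not totally geodesic (h ≢ 0). -/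
open scoped BigOperators

/-! In the coordinates `u`, with `s = u₃`, every quantity along `F` is rational in `u₂, u₃`: the
Christoffel symbols of the Defrise metric are `1/s` and `ε/s³` up to constants, and those of the
induced metric `ĝ` follow from `ĝ` and its inverse. The second fundamental form turns out to be
`β h = ĝ + ε u₃⁻⁴ du₃ ⊗ du₃`, which explains parallelism: `ĝ` is parallel for its own connection,
and so is `u₃⁻⁴ du₃ ⊗ du₃`, because the only nonzero `Γ̂³ₖᵢ` is `Γ̂³₃₃ = −2/u₃`. Since
`h₂₂ = 1/β`, the hypersurface is not totally geodesic. -/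

open Filter Topology

lemma hasDerivAt_const_div_pow (c : ℝ) {s : ℝ} (hs : s ≠ 0) (n : ℕ) :
    HasDerivAt (fun t : ℝ => c / t ^ n) (-(n * c) / s ^ (n + 1)) s := by
  refine ((hasDerivAt_const s c).div (hasDerivAt_pow n s) (pow_ne_zero n hs)).congr_deriv ?_
  rcases n with _ | n
  · simp
  · rw [Nat.add_sub_cancel]
    field_simp
    ring

lemma deriv_const_div_pow_add_const_div_pow (a b : ℝ) (m n : ℕ) {s : ℝ} (hs : s ≠ 0) :
    deriv (fun t : ℝ => a / t ^ m + b / t ^ n) s =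
      -(m * a) / s ^ (m + 1) - n * b / s ^ (n + 1) :=
  ((hasDerivAt_const_div_pow a hs m).add (hasDerivAt_const_div_pow b hs n)).deriv.trans
    (by ring)

lemma pd_congr_of_eventuallyEq {n : ℕ} {f g : (Fin n → ℝ) → ℝ} {x : Fin n → ℝ}
    (h : f =ᶠ[𝓝 x] g) (i : Fin n) : pd i f x = pd i g x := by
  have hupdate : Tendsto (Function.update x i) (𝓝 (x i)) (𝓝 x) := by
    simpa using ((continuous_const.update i continuous_id :
      Continuous fun t : ℝ => Function.update x i t)).tendsto (x i)
  exact Filter.EventuallyEq.deriv_eq (hupdate.eventually h)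

lemma pd_congr_of_coord_ne {n : ℕ} {f g : (Fin n → ℝ) → ℝ} {x : Fin n → ℝ} {i : Fin n}
    (hx : x i ≠ 0) (h : ∀ y : Fin n → ℝ, y i ≠ 0 → f y = g y) (k : Fin n) :
    pd k f x = pd k g x :=
  pd_congr_of_eventuallyEq
    (((continuous_apply i).continuousAt.eventually_ne hx).mono fun y hy => h y hy) k

noncomputable section

def defriseH (ε : ℝ) : ℝ → ℝ → ℝ → ℝ := fun _ b _ => ε / b ^ 2

def defriseMetric (β ε s : ℝ) : Matrix (Fin 4) (Fin 4) ℝ :=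
  !![0, β ^ 2 / s ^ 2, 0, 0;
     β ^ 2 / s ^ 2, β ^ 2 * ε / s ^ 4, 0, 0;
     0, 0, β ^ 2 / s ^ 2, 0;
     0, 0, 0, β ^ 2 / s ^ 2]

lemma siklos_defriseH (β ε : ℝ) (x : Fin 4 → ℝ) :
    siklos β (defriseH ε) x = defriseMetric β ε (x 2) := by
  ext i j
  fin_cases i <;> fin_cases j <;>
    simp [siklos, defriseH, defriseMetric, div_mul_div_comm, ← pow_add]

lemma defriseMetric_inv {β s : ℝ} (ε : ℝ) (hβ : β ≠ 0) (hs : s ≠ 0) :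
    (defriseMetric β ε s)⁻¹ =
      !![-ε / β ^ 2, s ^ 2 / β ^ 2, 0, 0;
         s ^ 2 / β ^ 2, 0, 0, 0;
         0, 0, s ^ 2 / β ^ 2, 0;
         0, 0, 0, s ^ 2 / β ^ 2] := by
  refine Matrix.inv_eq_right_inv ?_
  ext i j
  fin_cases i <;> fin_cases j <;>
    simp [defriseMetric, Matrix.mul_apply, Fin.sum_univ_four, hβ, hs]
  field_simp
  ring

lemma pd_defriseMetric (β ε : ℝ) {x : Fin 4 → ℝ} (hx : x 2 ≠ 0) (i l j : Fin 4) :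
    pd i (fun y => defriseMetric β ε (y 2) l j) x =
      if i = 2 then
        !![0, -2 * β ^ 2 / x 2 ^ 3, 0, 0;
           -2 * β ^ 2 / x 2 ^ 3, -4 * β ^ 2 * ε / x 2 ^ 5, 0, 0;
           0, 0, -2 * β ^ 2 / x 2 ^ 3, 0;
           0, 0, 0, -2 * β ^ 2 / x 2 ^ 3] l j
      else 0 := by
  split_ifs with hi
  · subst hi
    fin_cases l <;> fin_cases j <;>
      simp [pd, defriseMetric, (hasDerivAt_const_div_pow _ hx _).deriv]
    all_goals ring
  · simp [pd, Function.update_of_ne (Ne.symm hi)]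

def defriseChristoffel (ε s : ℝ) : Fin 4 → Fin 4 → Fin 4 → ℝ :=
  ![![![0, 0, -1 / s, 0], ![0, 0, -ε / s ^ 3, 0], ![-1 / s, -ε / s ^ 3, 0, 0], ![0, 0, 0, 0]],
    ![![0, 0, 0, 0], ![0, 0, -1 / s, 0], ![0, -1 / s, 0, 0], ![0, 0, 0, 0]],
    ![![0, 1 / s, 0, 0], ![1 / s, 2 * ε / s ^ 3, 0, 0], ![0, 0, -1 / s, 0], ![0, 0, 0, 1 / s]],
    ![![0, 0, 0, 0], ![0, 0, 0, 0], ![0, 0, 0, -1 / s], ![0, 0, -1 / s, 0]]]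

lemma christoffel_siklos_defriseH {β : ℝ} (ε : ℝ) (hβ : β ≠ 0) {x : Fin 4 → ℝ} (hx : x 2 ≠ 0)
    (k i j : Fin 4) :
    christoffel (siklos β (defriseH ε)) x k i j = defriseChristoffel ε (x 2) k i j := by
  simp only [christoffel, siklos_defriseH, defriseMetric_inv ε hβ hx, pd_defriseMetric β ε hx,
    Fin.sum_univ_four]
  fin_cases k <;> fin_cases i <;> fin_cases j <;>
    simp [defriseChristoffel] <;> field_simp <;> ring

def defriseImmersion (β : ℝ) (u : Fin 3 → ℝ) : Fin 4 → ℝ := ![u 0, -u 2 / β, u 2, -u 1 * u 2 / β]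

def defriseNormal (β : ℝ) (u : Fin 3 → ℝ) : Fin 4 → ℝ := ![u 2, 0, u 2 / β, 0]

lemma siklos_defriseImmersion (β ε : ℝ) (u : Fin 3 → ℝ) :
    siklos β (defriseH ε) (defriseImmersion β u) = defriseMetric β ε (u 2) := by
  simp [siklos_defriseH, defriseImmersion]

lemma Fu_defriseImmersion (β : ℝ) (i : Fin 3) (u : Fin 3 → ℝ) :
    Fu (defriseImmersion β) i u =
      ![![1, 0, 0, 0], ![0, 0, 0, -u 2 / β], ![0, -1 / β, 1, -u 1 / β]] i := by
  ext k
  fin_cases i <;> fin_cases k <;> simp [Fu, pd, defriseImmersion]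

lemma gApply_defriseMetric (β ε s : ℝ) (X Y : Fin 4 → ℝ) :
    gApply (defriseMetric β ε s) X Y =
      β ^ 2 / s ^ 2 * (X 0 * Y 1 + X 1 * Y 0 + X 2 * Y 2 + X 3 * Y 3)
        + β ^ 2 * ε / s ^ 4 * (X 1 * Y 1) := by
  simp [gApply, defriseMetric, Fin.sum_univ_four]
  ring

lemma gApply_defriseNormal_self {β : ℝ} (ε : ℝ) (hβ : β ≠ 0) {u : Fin 3 → ℝ} (hu : u 2 ≠ 0) :
    gApply (siklos β (defriseH ε) (defriseImmersion β u)) (defriseNormal β u)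
      (defriseNormal β u) = 1 := by
  simp [siklos_defriseImmersion, gApply_defriseMetric, defriseNormal]
  field_simp

lemma gApply_defriseNormal_Fu (β ε : ℝ) (u : Fin 3 → ℝ) (i : Fin 3) :
    gApply (siklos β (defriseH ε) (defriseImmersion β u)) (defriseNormal β u)
      (Fu (defriseImmersion β) i u) = 0 := by
  rw [siklos_defriseImmersion, gApply_defriseMetric, Fu_defriseImmersion]
  fin_cases i <;> simp [defriseNormal, div_eq_mul_inv]

def defriseSff (β ε : ℝ) (u : Fin 3 → ℝ) : Matrix (Fin 3) (Fin 3) ℝ :=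
  !![0, 0, -1 / u 2 ^ 2;
     0, 1 / β, u 1 / β / u 2;
     -1 / u 2 ^ 2, u 1 / β / u 2, (u 1 ^ 2 + β ^ 2) / β / u 2 ^ 2 + 2 * ε / β / u 2 ^ 4]

lemma sff_defriseImmersion {β : ℝ} (ε : ℝ) (hβ : β ≠ 0) {u : Fin 3 → ℝ} (hu : u 2 ≠ 0)
    (i j : Fin 3) :
    sff β (defriseH ε) (defriseImmersion β) (defriseNormal β) i j u = defriseSff β ε u i j := by
  have hF : defriseImmersion β u 2 ≠ 0 := by simpa [defriseImmersion] using hu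
  simp only [sff, ambD, christoffel_siklos_defriseH ε hβ hF, siklos_defriseImmersion,
    gApply_defriseMetric, Fu_defriseImmersion, Fin.sum_univ_four]
  fin_cases i <;> fin_cases j <;>
    simp [defriseNormal, defriseImmersion, defriseChristoffel, defriseSff, pd]
  all_goals field_simp
  all_goals ring

def defriseInducedMetric (β ε : ℝ) (u : Fin 3 → ℝ) : Matrix (Fin 3) (Fin 3) ℝ :=
  !![0, 0, -β / u 2 ^ 2;
     0, 1, u 1 / u 2;
     -β / u 2 ^ 2, u 1 / u 2, (u 1 ^ 2 + β ^ 2) / u 2 ^ 2 + ε / u 2 ^ 4]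

lemma inducedMetric_defriseImmersion {β : ℝ} (ε : ℝ) (hβ : β ≠ 0) {u : Fin 3 → ℝ}
    (hu : u 2 ≠ 0) :
    inducedMetric β (defriseH ε) (defriseImmersion β) u = defriseInducedMetric β ε u := by
  ext i j
  simp only [inducedMetric, Matrix.of_apply, siklos_defriseImmersion, gApply_defriseMetric,
    Fu_defriseImmersion]
  fin_cases i <;> fin_cases j <;> simp [defriseInducedMetric]
  all_goals field_simp
  all_goals ring

lemma defriseInducedMetric_inv {β : ℝ} (ε : ℝ) (hβ : β ≠ 0) {u : Fin 3 → ℝ} (hu : u 2 ≠ 0) :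
    (defriseInducedMetric β ε u)⁻¹ =
      !![-(ε + β ^ 2 * u 2 ^ 2) / β ^ 2, u 1 * u 2 / β, -u 2 ^ 2 / β;
         u 1 * u 2 / β, 1, 0;
         -u 2 ^ 2 / β, 0, 0] := by
  refine Matrix.inv_eq_right_inv ?_
  ext i j
  fin_cases i <;> fin_cases j <;>
    simp [defriseInducedMetric, Matrix.mul_apply, Fin.sum_univ_three]
  all_goals field_simp
  all_goals ring

def defriseInducedMetricDeriv (β ε : ℝ) (u : Fin 3 → ℝ) : Fin 3 → Matrix (Fin 3) (Fin 3) ℝ :=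
  ![0,
    !![0, 0, 0;
       0, 0, 1 / u 2;
       0, 1 / u 2, 2 * u 1 / u 2 ^ 2],
    !![0, 0, 2 * β / u 2 ^ 3;
       0, 0, -u 1 / u 2 ^ 2;
       2 * β / u 2 ^ 3, -u 1 / u 2 ^ 2, -2 * (u 1 ^ 2 + β ^ 2) / u 2 ^ 3 - 4 * ε / u 2 ^ 5]]

lemma pd_defriseInducedMetric (β ε : ℝ) {u : Fin 3 → ℝ} (hu : u 2 ≠ 0) (k i j : Fin 3) :
    pd k (fun v => defriseInducedMetric β ε v i j) u = defriseInducedMetricDeriv β ε u k i j := by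
  fin_cases k <;> fin_cases i <;> fin_cases j <;>
    simp [pd, defriseInducedMetric, defriseInducedMetricDeriv,
      (hasDerivAt_const_div_pow _ hu _).deriv, deriv_const_div_pow_add_const_div_pow _ _ _ _ hu]

def defriseInducedChristoffel (β : ℝ) (u : Fin 3 → ℝ) : Fin 3 → Matrix (Fin 3) (Fin 3) ℝ :=
  ![!![0, 0, 0;
       0, -u 2 / β, -u 1 / β;
       0, -u 1 / β, -(u 1 ^ 2 + β ^ 2) / (β * u 2)],
    0,
    !![0, 0, 0;
       0, 0, 0;
       0, 0, -2 / u 2]]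

lemma christoffel_inducedMetric_defriseImmersion {β : ℝ} (ε : ℝ) (hβ : β ≠ 0) {u : Fin 3 → ℝ}
    (hu : u 2 ≠ 0) (k i j : Fin 3) :
    christoffel (inducedMetric β (defriseH ε) (defriseImmersion β)) u k i j =
      defriseInducedChristoffel β u k i j := by
  have hpd : ∀ a b c : Fin 3,
      pd a (fun v => inducedMetric β (defriseH ε) (defriseImmersion β) v b c) u =
        defriseInducedMetricDeriv β ε u a b c := fun a b c => by
    rw [pd_congr_of_coord_ne hu (fun v hv => by rw [inducedMetric_defriseImmersion ε hβ hv]),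
      pd_defriseInducedMetric β ε hu]
  simp only [christoffel, inducedMetric_defriseImmersion ε hβ hu,
    defriseInducedMetric_inv ε hβ hu, hpd, Fin.sum_univ_three]
  fin_cases k <;> fin_cases i <;> fin_cases j <;>
    simp [defriseInducedMetricDeriv, defriseInducedChristoffel]
  all_goals field_simp
  all_goals ring

def defriseSffDeriv (β ε : ℝ) (u : Fin 3 → ℝ) : Fin 3 → Matrix (Fin 3) (Fin 3) ℝ :=
  ![0,
    !![0, 0, 0;
       0, 0, 1 / (β * u 2);
       0, 1 / (β * u 2), 2 * u 1 / (β * u 2 ^ 2)],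
    !![0, 0, 2 / u 2 ^ 3;
       0, 0, -u 1 / (β * u 2 ^ 2);
       2 / u 2 ^ 3, -u 1 / (β * u 2 ^ 2),
         -2 * (u 1 ^ 2 + β ^ 2) / (β * u 2 ^ 3) - 8 * ε / (β * u 2 ^ 5)]]

lemma pd_defriseSff (β ε : ℝ) {u : Fin 3 → ℝ} (hu : u 2 ≠ 0) (k i j : Fin 3) :
    pd k (fun v => defriseSff β ε v i j) u = defriseSffDeriv β ε u k i j := by
  fin_cases k <;> fin_cases i <;> fin_cases j <;>
    simp [pd, defriseSff, defriseSffDeriv,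
      (hasDerivAt_const_div_pow _ hu _).deriv, deriv_const_div_pow_add_const_div_pow _ _ _ _ hu]
  all_goals field_simp
  all_goals ring

lemma nablah_defriseImmersion {β : ℝ} (ε : ℝ) (hβ : β ≠ 0) {u : Fin 3 → ℝ} (hu : u 2 ≠ 0)
    (k i j : Fin 3) :
    nablah β (defriseH ε) (defriseImmersion β) (defriseNormal β) k i j u = 0 := by
  have hpd : ∀ a b c : Fin 3,
      pd a (fun v => sff β (defriseH ε) (defriseImmersion β) (defriseNormal β) b c v) u =
        defriseSffDeriv β ε u a b c := fun a b c => by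
    rw [pd_congr_of_coord_ne hu (fun v hv => sff_defriseImmersion ε hβ hv b c),
      pd_defriseSff β ε hu]
  simp only [nablah, hpd, christoffel_inducedMetric_defriseImmersion ε hβ hu,
    sff_defriseImmersion ε hβ hu, Fin.sum_univ_three]
  fin_cases k <;> fin_cases i <;> fin_cases j <;>
    simp [defriseSffDeriv, defriseInducedChristoffel, defriseSff]
  all_goals field_simp
  all_goals ring

end

theorem stmt_19_general (β : ℝ) (hβ : 0 < β) (ε : ℝ)
    (H : ℝ → ℝ → ℝ → ℝ) (hH : H = fun _ b _ => ε / b ^ 2)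
    (F ξ : (Fin 3 → ℝ) → Fin 4 → ℝ)
    (hF : F = fun u => ![u 0, -u 2 / β, u 2, -u 1 * u 2 / β])
    (hξ : ξ = fun u => ![u 2, 0, u 2 / β, 0]) :
    (∀ u : Fin 3 → ℝ, 0 < u 2 →
      gApply (siklos β H (F u)) (ξ u) (ξ u) = 1 ∧
      ∀ i : Fin 3, gApply (siklos β H (F u)) (ξ u) (Fu F i u) = 0) ∧
    (∀ u : Fin 3 → ℝ, 0 < u 2 → ∀ k i j : Fin 3, nablah β H F ξ k i j u = 0) ∧
    ¬(∀ u : Fin 3 → ℝ, 0 < u 2 → ∀ i j : Fin 3, sff β H F ξ i j u = 0) := by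
  have hβ0 : β ≠ 0 := hβ.ne'
  obtain rfl : H = defriseH ε := hH
  obtain rfl : F = defriseImmersion β := hF
  obtain rfl : ξ = defriseNormal β := hξ
  refine ⟨fun u hu => ⟨gApply_defriseNormal_self ε hβ0 hu.ne', gApply_defriseNormal_Fu β ε u⟩,
    fun u hu => nablah_defriseImmersion ε hβ0 hu.ne', fun hgeodesic => ?_⟩
  have h11 := hgeodesic ![0, 0, 1] (by simp) 1 1
  rw [sff_defriseImmersion ε hβ0 (by simp)] at h11
  simp [defriseSff, hβ0] at h11

/-- for `H(x₂,x₃,x₄) = ε·x₃^{−2}` (`k = −1`, Defrise spacetime), the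
immersion `F(u) = (u₁, −u₃/β, u₃, −u₂u₃/β)` is parallel and not totally geodesic. -/
theorem stmt_19 (β : ℝ) (hβ : 0 < β) (ε : ℝ) (hε : ε = -1 ∨ ε = 1)
    (H : ℝ → ℝ → ℝ → ℝ) (hH : H = fun _ b _ => ε / b ^ 2)
    (F ξ : (Fin 3 → ℝ) → Fin 4 → ℝ)
    (hF : F = fun u => ![u 0, -u 2 / β, u 2, -u 1 * u 2 / β])
    (hξ : ξ = fun u => ![u 2, 0, u 2 / β, 0]) :
    (∀ u : Fin 3 → ℝ, 0 < u 2 →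
      gApply (siklos β H (F u)) (ξ u) (ξ u) = 1 ∧
      ∀ i : Fin 3, gApply (siklos β H (F u)) (ξ u) (Fu F i u) = 0) ∧
    (∀ u : Fin 3 → ℝ, 0 < u 2 → ∀ k i j : Fin 3, nablah β H F ξ k i j u = 0) ∧
    ¬(∀ u : Fin 3 → ℝ, 0 < u 2 → ∀ i j : Fin 3, sff β H F ξ i j u = 0) :=
  stmt_19_general β hβ ε H hH F ξ hF hξ
end
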